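/- For every λ ∈ ℂ* and z ∈ ℂ − (−∞,0], the matrix L(z,λ) = [[1,0],[λ^{-1} log(z/2),1]] · [[y_0, λ z (y_0)_z],[(1/4) y_1, y_0 + (λ z /4)(y_1)_z]] has determinant 1. -/

import Mathlib

/-!
Put `u = z⁴/(16λ²)`, `I(u) = ∑ uʲ/(j!)²` and `J(u) = ∑ Hⱼ uʲ/(j!)²`, so that `y₀ = I(u)` and
`y₁ = -2λ⁻¹ J(u)`. For the Euler operator `θ = u d/du`, the recurrences of the coefficients read
`(θI)' = I` and `(θJ)' = J + I'`. The first factor of `L` is unipotent, and the determinant of the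
second is `W = I² - 2 (I·θJ - J·θI)`. Differentiating, `W' = 2II' - 2(I'·θJ - J'·θI) - 2I(J + I')
+ 2JI = 0`, because `I'·θJ = u I'J' = J'·θI`; hence `W ≡ W(0) = 1`.
-/

open FormalMultilinearSeries
open scoped Nat

noncomputable section

def derivCoeff (c : ℕ → ℂ) (n : ℕ) : ℂ := (n + 1) * c (n + 1)

def eulerCoeff (c : ℕ → ℂ) (n : ℕ) : ℂ := n * c n

section ExpTypeSeries

variable {c : ℕ → ℂ} {C K : ℝ}

theorem norm_derivCoeff_le (hc : ∀ n, ‖c n‖ ≤ C * K ^ n / n !) (n : ℕ) :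
    ‖derivCoeff c n‖ ≤ C * K * K ^ n / n ! := by
  have hn : ‖((n : ℂ) + 1)‖ = n + 1 := by exact_mod_cast Complex.norm_natCast (n + 1)
  calc ‖derivCoeff c n‖ = (n + 1) * ‖c (n + 1)‖ := by rw [derivCoeff, norm_mul, hn]
    _ ≤ (n + 1) * (C * K ^ (n + 1) / (n + 1)!) := by gcongr; exact hc _
    _ = C * K * K ^ n / n ! := by
      rw [Nat.factorial_succ]
      push_cast
      field_simp
      ring

theorem norm_eulerCoeff_le (hc : ∀ n, ‖c n‖ ≤ C * K ^ n / n !) (n : ℕ) :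
    ‖eulerCoeff c n‖ ≤ C * (2 * K) ^ n / n ! := by
  have hC : 0 ≤ C * K ^ n / n ! := (norm_nonneg _).trans (hc n)
  have h2 : (n : ℝ) ≤ 2 ^ n := by exact_mod_cast n.lt_two_pow_self.le
  calc ‖eulerCoeff c n‖ = n * ‖c n‖ := by rw [eulerCoeff, norm_mul, Complex.norm_natCast]
    _ ≤ 2 ^ n * (C * K ^ n / n !) := mul_le_mul h2 (hc n) (norm_nonneg _) (by positivity)
    _ = C * (2 * K) ^ n / n ! := by ring

theorem summable_coeff_mul_pow (hc : ∀ n, ‖c n‖ ≤ C * K ^ n / n !) (w : ℂ) :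
    Summable fun n => c n * w ^ n := by
  refine .of_norm_bounded ((Real.summable_pow_div_factorial (K * ‖w‖)).mul_left C) fun n => ?_
  calc ‖c n * w ^ n‖ = ‖c n‖ * ‖w‖ ^ n := by rw [norm_mul, norm_pow]
    _ ≤ C * K ^ n / n ! * ‖w‖ ^ n := by gcongr; exact hc n
    _ = C * ((K * ‖w‖) ^ n / n !) := by ring

theorem ofScalarsSum_derivCoeff (hc : ∀ n, ‖c n‖ ≤ C * K ^ n / n !) (w : ℂ) :
    ofScalarsSum (derivCoeff c) w = ∑' n, c n * (n * w ^ (n - 1)) := by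
  have hs : Summable fun n => derivCoeff c n * w ^ n :=
    summable_coeff_mul_pow (norm_derivCoeff_le hc) w
  rw [ofScalars_sum_eq, tsum_eq_zero_add' (f := fun n => c n * (n * w ^ (n - 1)))]
  · simp only [derivCoeff, smul_eq_mul, Nat.add_sub_cancel, Nat.cast_add, Nat.cast_one,
      CharP.cast_eq_zero, zero_mul, mul_zero, zero_add]
    exact tsum_congr fun n => by ring
  · refine hs.congr fun n => ?_
    simp only [derivCoeff, Nat.add_sub_cancel, Nat.cast_add, Nat.cast_one]
    ring

theorem hasDerivAt_ofScalarsSum (hc : ∀ n, ‖c n‖ ≤ C * K ^ n / n !) (w : ℂ) :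
    HasDerivAt (ofScalarsSum (E := ℂ) c) (ofScalarsSum (derivCoeff c) w) w := by
  set R := ‖w‖ + 1
  have hR : 0 ≤ R := by positivity
  have hw : w ∈ Metric.ball (0 : ℂ) R := by simp [R]
  clear_value R
  have hu : Summable fun n => n * ‖c n‖ * R ^ (n - 1) := by
    rw [← summable_nat_add_iff 1]
    refine .of_nonneg_of_le (fun n => by positivity) (fun n => ?_)
      ((Real.summable_pow_div_factorial (K * R)).mul_left (C * K))
    calc ((n + 1 : ℕ) : ℝ) * ‖c (n + 1)‖ * R ^ (n + 1 - 1) = ‖derivCoeff c n‖ * R ^ n := by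
          rw [derivCoeff, norm_mul, ← Complex.norm_natCast]; push_cast; simp
      _ ≤ C * K * K ^ n / n ! * R ^ n := by gcongr; exact norm_derivCoeff_le hc n
      _ = C * K * ((K * R) ^ n / n !) := by ring
  have hg (n : ℕ) (y : ℂ) : HasDerivAt (fun y => c n • y ^ n) (c n * (n * y ^ (n - 1))) y :=
    (hasDerivAt_pow n y).const_mul (c n)
  have hg' (n : ℕ) (y : ℂ) (hy : y ∈ Metric.ball (0 : ℂ) R) :
      ‖c n * (n * y ^ (n - 1))‖ ≤ n * ‖c n‖ * R ^ (n - 1) := by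
    rw [mem_ball_zero_iff] at hy
    rw [norm_mul, norm_mul, norm_pow, Complex.norm_natCast, mul_left_comm, mul_assoc]
    gcongr
  rw [ofScalarsSum_eq_tsum, ofScalarsSum_derivCoeff hc]
  exact hasDerivAt_tsum_of_isPreconnected hu Metric.isOpen_ball
    (convex_ball (0 : ℂ) R).isPreconnected (fun n y _ => hg n y) hg' hw
    (by simpa using summable_coeff_mul_pow hc w) hw

theorem mul_ofScalarsSum_derivCoeff (hc : ∀ n, ‖c n‖ ≤ C * K ^ n / n !) (w : ℂ) :
    w * ofScalarsSum (derivCoeff c) w = ofScalarsSum (eulerCoeff c) w := by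
  rw [ofScalarsSum_derivCoeff hc, ofScalars_sum_eq, ← tsum_mul_left]
  refine tsum_congr fun n => ?_
  rcases n with _ | n
  · simp [eulerCoeff]
  · simp only [eulerCoeff, smul_eq_mul, Nat.add_sub_cancel, pow_succ]
    ring

theorem ofScalarsSum_add {d : ℕ → ℂ} {D L : ℝ} (hc : ∀ n, ‖c n‖ ≤ C * K ^ n / n !)
    (hd : ∀ n, ‖d n‖ ≤ D * L ^ n / n !) (w : ℂ) :
    ofScalarsSum (c + d) w = ofScalarsSum c w + ofScalarsSum d w := by
  simp only [ofScalars_sum_eq, Pi.add_apply, smul_eq_mul, add_mul]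
  exact (summable_coeff_mul_pow hc w).tsum_add (summable_coeff_mul_pow hd w)

theorem hasDerivAt_ofScalarsSum_mul_pow_four (hc : ∀ n, ‖c n‖ ≤ C * K ^ n / n !) (b z : ℂ) :
    HasDerivAt (fun z => ofScalarsSum c (b * z ^ 4))
      (ofScalarsSum (derivCoeff c) (b * z ^ 4) * (4 * b * z ^ 3)) z := by
  refine ((hasDerivAt_ofScalarsSum hc _).comp z ((hasDerivAt_pow 4 z).const_mul b)).congr_deriv ?_
  rw [Nat.cast_ofNat]
  ring

end ExpTypeSeries

def besselCoeff (j : ℕ) : ℂ := ((j ! : ℂ) ^ 2)⁻¹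

def harmonicBesselCoeff (j : ℕ) : ℂ := (harmonic j : ℂ) * besselCoeff j

theorem harmonic_le_self (n : ℕ) : harmonic n ≤ n := by
  induction n with
  | zero => simp
  | succ n ih =>
    rw [harmonic_succ]
    push_cast
    linarith [inv_le_one_of_one_le₀ (by simp : (1 : ℚ) ≤ n + 1)]

theorem norm_besselCoeff_le (n : ℕ) : ‖besselCoeff n‖ ≤ 1 * 1 ^ n / n ! := by
  have h : (1 : ℝ) ≤ n ! := by exact_mod_cast n.factorial_pos
  rw [besselCoeff, norm_inv, norm_pow, Complex.norm_natCast, one_pow, one_mul, one_div]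
  exact inv_anti₀ (by positivity) (by nlinarith)

theorem norm_harmonicBesselCoeff_le (n : ℕ) : ‖harmonicBesselCoeff n‖ ≤ 1 * 1 ^ n / n ! := by
  have h : (1 : ℝ) ≤ n ! := by exact_mod_cast n.factorial_pos
  have hH : ‖((harmonic n : ℚ) : ℂ)‖ ≤ n ! := by
    rw [Complex.norm_ratCast, abs_of_nonneg (by unfold harmonic; positivity)]
    exact_mod_cast (harmonic_le_self n).trans (by exact_mod_cast n.self_le_factorial)
  rw [harmonicBesselCoeff, besselCoeff, norm_mul, norm_inv, norm_pow, Complex.norm_natCast,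
    one_pow, one_mul, le_div_iff₀ (by positivity)]
  calc ‖((harmonic n : ℚ) : ℂ)‖ * ((n ! : ℝ) ^ 2)⁻¹ * n ! ≤ n ! * ((n ! : ℝ) ^ 2)⁻¹ * n ! := by
        gcongr
    _ = 1 := by field_simp

theorem derivCoeff_eulerCoeff_besselCoeff :
    derivCoeff (eulerCoeff besselCoeff) = besselCoeff := by
  ext n
  simp only [derivCoeff, eulerCoeff, besselCoeff, Nat.factorial_succ]
  push_cast
  field_simp

theorem derivCoeff_eulerCoeff_harmonicBesselCoeff :
    derivCoeff (eulerCoeff harmonicBesselCoeff) =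
      harmonicBesselCoeff + derivCoeff besselCoeff := by
  ext n
  simp only [derivCoeff, eulerCoeff, harmonicBesselCoeff, besselCoeff, Nat.factorial_succ,
    harmonic_succ, Pi.add_apply]
  push_cast
  field_simp

def besselWronskian (u : ℂ) : ℂ :=
  ofScalarsSum besselCoeff u ^ 2 -
    2 * (ofScalarsSum besselCoeff u * ofScalarsSum (eulerCoeff harmonicBesselCoeff) u -
      ofScalarsSum harmonicBesselCoeff u * ofScalarsSum (eulerCoeff besselCoeff) u)

theorem hasDerivAt_besselWronskian (u : ℂ) : HasDerivAt besselWronskian 0 u := by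
  have hI := hasDerivAt_ofScalarsSum norm_besselCoeff_le u
  have hJ := hasDerivAt_ofScalarsSum norm_harmonicBesselCoeff_le u
  have hθI := hasDerivAt_ofScalarsSum (norm_eulerCoeff_le norm_besselCoeff_le) u
  have hθJ := hasDerivAt_ofScalarsSum (norm_eulerCoeff_le norm_harmonicBesselCoeff_le) u
  rw [derivCoeff_eulerCoeff_besselCoeff] at hθI
  rw [derivCoeff_eulerCoeff_harmonicBesselCoeff, ofScalarsSum_add norm_harmonicBesselCoeff_le
    (norm_derivCoeff_le norm_besselCoeff_le)] at hθJ
  refine ((hI.pow 2).sub (((hI.mul hθJ).sub (hJ.mul hθI)).const_mul 2)).congr_deriv ?_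
  rw [← mul_ofScalarsSum_derivCoeff norm_besselCoeff_le,
    ← mul_ofScalarsSum_derivCoeff norm_harmonicBesselCoeff_le]
  ring

theorem besselWronskian_eq_one (u : ℂ) : besselWronskian u = 1 := by
  rw [is_const_of_deriv_eq_zero (fun u => (hasDerivAt_besselWronskian u).differentiableAt)
    (fun u => (hasDerivAt_besselWronskian u).deriv) u 0]
  simp [besselWronskian, besselCoeff, eulerCoeff]

theorem tsum_eq_ofScalarsSum_besselCoeff (a z : ℂ) :
    ∑' j : ℕ, a ^ (2 * j) * z ^ (4 * j) / (16 ^ j * (j ! : ℂ) ^ 2) =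
      ofScalarsSum besselCoeff (a ^ 2 / 16 * z ^ 4) := by
  rw [ofScalars_sum_eq]
  refine tsum_congr fun j => ?_
  rw [besselCoeff, smul_eq_mul, pow_mul, pow_mul, mul_pow, div_pow]
  field_simp

theorem tsum_eq_ofScalarsSum_harmonicBesselCoeff (a z : ℂ) :
    ∑' j : ℕ, ((harmonic (j + 1) : ℚ) : ℂ) * a ^ (2 * (j + 1)) * z ^ (4 * (j + 1)) /
        (16 ^ (j + 1) * ((j + 1)! : ℂ) ^ 2) =
      ofScalarsSum harmonicBesselCoeff (a ^ 2 / 16 * z ^ 4) := by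
  have hs := (summable_nat_add_iff 1).2
    (summable_coeff_mul_pow norm_harmonicBesselCoeff_le (a ^ 2 / 16 * z ^ 4))
  rw [ofScalars_sum_eq, tsum_eq_zero_add' (f := fun j => harmonicBesselCoeff j • _)
    (by simpa only [smul_eq_mul] using hs)]
  simp only [harmonicBesselCoeff, harmonic_zero, Rat.cast_zero, zero_mul, zero_smul, zero_add]
  refine tsum_congr fun j => ?_
  rw [besselCoeff, smul_eq_mul, pow_mul, pow_mul, mul_pow, div_pow]
  field_simp

end

/-- For every `λ ∈ ℂ*` and `z ∈ ℂ − (−∞,0]`, the matrix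
`L(z,λ) = [[1,0],[λ⁻¹ log(z/2),1]] · [[y₀, λ z y₀'],[y₁/4, y₀ + (λ z/4) y₁']]`
has determinant 1. -/
theorem stmt4 (lam : ℂ) (hlam : lam ≠ 0)
    (y₀ y₁ : ℂ → ℂ)
    (hy₀ : ∀ z : ℂ, y₀ z = ∑' j : ℕ, lam⁻¹ ^ (2 * j) * z ^ (4 * j) /
      (16 ^ j * ((Nat.factorial j : ℂ)) ^ 2))
    (hy₁ : ∀ z : ℂ, y₁ z = (-2) * lam⁻¹ *
      ∑' j : ℕ, ((harmonic (j + 1) : ℚ) : ℂ) * lam⁻¹ ^ (2 * (j + 1)) * z ^ (4 * (j + 1)) /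
        (16 ^ (j + 1) * ((Nat.factorial (j + 1) : ℂ)) ^ 2)) :
    ∀ z : ℂ, z ∈ Complex.slitPlane →
      Matrix.det
        (!![(1 : ℂ), 0; lam⁻¹ * Complex.log (z / 2), 1] *
         !![y₀ z, lam * z * deriv y₀ z;
            (1 / 4) * y₁ z, y₀ z + lam * z * (1 / 4) * deriv y₁ z]) = 1 := by
  intro z _
  have h₀ : y₀ = fun z => ofScalarsSum besselCoeff (lam⁻¹ ^ 2 / 16 * z ^ 4) :=
    funext fun z => (hy₀ z).trans (tsum_eq_ofScalarsSum_besselCoeff _ _)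
  have h₁ : y₁ = fun z => -2 * lam⁻¹ * ofScalarsSum harmonicBesselCoeff (lam⁻¹ ^ 2 / 16 * z ^ 4) :=
    funext fun z => (hy₁ z).trans (by rw [tsum_eq_ofScalarsSum_harmonicBesselCoeff])
  have hd₀ := (hasDerivAt_ofScalarsSum_mul_pow_four norm_besselCoeff_le (lam⁻¹ ^ 2 / 16) z).deriv
  have hd₁ := ((hasDerivAt_ofScalarsSum_mul_pow_four norm_harmonicBesselCoeff_le
    (lam⁻¹ ^ 2 / 16) z).const_mul (-2 * lam⁻¹)).deriv
  have hW := besselWronskian_eq_one (lam⁻¹ ^ 2 / 16 * z ^ 4)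
  rw [besselWronskian, ← mul_ofScalarsSum_derivCoeff norm_besselCoeff_le,
    ← mul_ofScalarsSum_derivCoeff norm_harmonicBesselCoeff_le] at hW
  simp only [h₀, h₁, Matrix.det_mul, Matrix.det_fin_two_of, hd₀, hd₁]
  set I := ofScalarsSum besselCoeff (lam⁻¹ ^ 2 / 16 * z ^ 4)
  set J := ofScalarsSum harmonicBesselCoeff (lam⁻¹ ^ 2 / 16 * z ^ 4)
  set I' := ofScalarsSum (derivCoeff besselCoeff) (lam⁻¹ ^ 2 / 16 * z ^ 4)
  set J' := ofScalarsSum (derivCoeff harmonicBesselCoeff) (lam⁻¹ ^ 2 / 16 * z ^ 4)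
  linear_combination hW + lam⁻¹ ^ 2 * z ^ 4 / 8 * (I' * J - I * J') * mul_inv_cancel₀ hlam
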